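/- For λ > −1, t ∈ ℝ and integer m ≥ 2, let P_n(x;λ) denote the monic orthogonal polynomials of the generalised higher order Freud weight ω(x;t,λ) and β_n(λ) their recurrence coefficients. Then for every n ≥ 1: (i) x P_{2n}(x;λ+1) = P_{2n+1}(x;λ) as polynomials in x, and (ii) x² P_{2n−1}(x;λ+1) = x P_{2n}(x;λ) − ( β_{2n}(λ) + P_{2n+1}′(0;λ)/P_{2n−1}′(0;λ) ) P_{2n−1}(x;λ), where P_{2n−1}′(0;λ) ≠ 0. -/

import Mathlib

/-!
Write `Q = P(·;λ)` and `R = P(·;λ+1)`; the weights satisfy `ω(x;t,λ+1) = x² ω(x;t,λ)` and are even,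
so `R_{2n}` is even. The monic polynomial `x R_{2n}` is then `ω(·;λ)`-orthogonal to every `q` of
degree `≤ 2n`: writing `q = q(0) + x s`, the constant part pairs with an odd integrand, while
`∫ x R_{2n} · x s · ω(λ) = ∫ R_{2n} s ω(λ+1) = 0`. Uniqueness of monic orthogonal polynomials gives
`x R_{2n} = Q_{2n+1}`, which is (i).

Multiplying the recurrence `R_{2n} = x R_{2n-1} - β_{2n-1}(λ+1) R_{2n-2}` by `x` and using (i) twice
gives `x² R_{2n-1} = Q_{2n+1} + β_{2n-1}(λ+1) Q_{2n-1}`. Differentiating at `0` identifies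
`β_{2n-1}(λ+1) = -Q'_{2n+1}(0) / Q'_{2n-1}(0)`, where `Q'_{2n-1}(0) = R_{2n-2}(0) ≠ 0` because the
recurrence gives `R_{2k}(0) = (-1)^k β_1(λ+1) β_3(λ+1) ⋯ β_{2k-1}(λ+1)`. Substituting the
recurrence `x Q_{2n} = Q_{2n+1} + β_{2n}(λ) Q_{2n-1}` yields (ii).
-/

open MeasureTheory Real Polynomial

noncomputable def freudWeight (m : ℕ) (lam t x : ℝ) : ℝ :=
  |x| ^ (2 * lam + 1) * Real.exp (t * x ^ 2 - x ^ (2 * m))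

theorem derivative_X_mul_eval_zero {K : Type*} [CommSemiring K] (p : K[X]) :
    (derivative (X * p)).eval 0 = p.eval 0 := by
  simp

theorem span_image_Iio_eq_degreeLT {K : Type*} [Ring K] [Nontrivial K] {Q : ℕ → K[X]}
    (hmonic : ∀ n, (Q n).Monic) (hdeg : ∀ n, (Q n).natDegree = n) (n : ℕ) :
    Submodule.span K (Q '' Set.Iio n) = degreeLT K n := by
  let S : Sequence K := ⟨Q, fun i => by rw [degree_eq_natDegree (hmonic i).ne_zero, hdeg]⟩
  exact S.span_degreeLT fun i _ => by simp [S, (hmonic i).leadingCoeff]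

structure IsThreeTermRecurrence {K : Type*} [CommRing K] (Q : ℕ → K[X]) (b : ℕ → K) : Prop where
  zero : Q 0 = 1
  one : Q 1 = X
  succ_succ : ∀ n, Q (n + 2) = X * Q (n + 1) - C (b (n + 1)) * Q n

namespace IsThreeTermRecurrence

section CommRing

variable {K : Type*} [CommRing K] {Q : ℕ → K[X]} {b : ℕ → K}

theorem comp_neg_X (hQ : IsThreeTermRecurrence Q b) (n : ℕ) :
    (Q n).comp (-X) = (-1) ^ n * Q n := by
  induction n using Nat.twoStepInduction with
  | zero => simp [hQ.zero]
  | one => simp [hQ.one]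
  | more n ih ih' =>
    rw [hQ.succ_succ, sub_comp, mul_comp, mul_comp, X_comp, C_comp, ih, ih']
    ring

theorem comp_neg_X_two_mul (hQ : IsThreeTermRecurrence Q b) (n : ℕ) :
    (Q (2 * n)).comp (-X) = Q (2 * n) := by
  rw [hQ.comp_neg_X, (even_two_mul n).neg_one_pow, one_mul]

theorem eval_zero_two_mul_ne_zero [IsDomain K] (hQ : IsThreeTermRecurrence Q b)
    (hb : ∀ n, b (2 * n + 1) ≠ 0) (n : ℕ) : (Q (2 * n)).eval 0 ≠ 0 := by
  induction n with
  | zero => simp [hQ.zero]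
  | succ n ih =>
    rw [show 2 * (n + 1) = 2 * n + 2 by ring, hQ.succ_succ]
    simpa using ⟨hb n, ih⟩

end CommRing

variable {K : Type*} [Field K] {Q R : ℕ → K[X]} {b c : ℕ → K}

theorem X_sq_mul_eq (hQ : IsThreeTermRecurrence Q b) (hR : IsThreeTermRecurrence R c)
    (hRQ : ∀ n, X * R (2 * n) = Q (2 * n + 1)) (hc : ∀ n, c (2 * n + 1) ≠ 0) (k : ℕ) :
    X ^ 2 * R (2 * k + 1) =
      X * Q (2 * k + 2) - C (b (2 * k + 2) +
        (derivative (Q (2 * k + 3))).eval 0 / (derivative (Q (2 * k + 1))).eval 0) *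
          Q (2 * k + 1) := by
  have hsq : X ^ 2 * R (2 * k + 1) = Q (2 * k + 3) + C (c (2 * k + 1)) * Q (2 * k + 1) := by
    have hnext : X * R (2 * k + 2) = Q (2 * k + 3) := hRQ (k + 1)
    linear_combination (-X) * hR.succ_succ (2 * k) + hnext + C (c (2 * k + 1)) * hRQ k
  have hder : (derivative (Q (2 * k + 1))).eval 0 ≠ 0 := by
    rw [← hRQ k, derivative_X_mul_eval_zero]
    exact hR.eval_zero_two_mul_ne_zero hc k
  have hcoef : c (2 * k + 1) = -((derivative (Q (2 * k + 3))).eval 0 /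
      (derivative (Q (2 * k + 1))).eval 0) := by
    have hder_sq := congrArg (fun p => (derivative p).eval 0) hsq
    simp only [derivative_mul, derivative_X_pow, derivative_add, derivative_C, eval_add, eval_mul,
      eval_pow, eval_X, eval_C, zero_mul, zero_add, zero_pow two_ne_zero] at hder_sq
    rw [neg_div', eq_div_iff hder]
    linear_combination -hder_sq
  rw [hsq, hcoef, C_add, C_neg]
  linear_combination hQ.succ_succ (2 * k + 1)

end IsThreeTermRecurrence

theorem integral_eq_zero_of_odd {f : ℝ → ℝ} (hf : ∀ x, f (-x) = -f x) : ∫ x, f x = 0 := by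
  have h := integral_neg_eq_self f volume
  simp only [hf, integral_neg] at h
  linarith

theorem integrable_of_even_of_integrableOn_Ioi {f : ℝ → ℝ} (heven : ∀ x, f (-x) = f x)
    (hf : IntegrableOn f (Set.Ioi 0)) : Integrable f := by
  have hneg : IntegrableOn f (Set.Iio 0) := by
    simpa [heven] using (show IntegrableOn f (Set.Ioi (-0)) by simpa using hf).comp_neg_Iio
  rw [← integrableOn_univ, ← Set.Iio_union_Ici (a := (0 : ℝ)), integrableOn_union,
    integrableOn_Ici_iff_integrableOn_Ioi]
  exact ⟨hneg, hf⟩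

structure IsMomentWeight (w : ℝ → ℝ) : Prop where
  integrable : ∀ p : ℝ[X], Integrable fun x => p.eval x * w x
  ae_pos : ∀ᵐ x, 0 < w x

structure IsMonicOrthogonal (w : ℝ → ℝ) (Q : ℕ → ℝ[X]) : Prop where
  monic : ∀ n, (Q n).Monic
  natDegree_eq : ∀ n, (Q n).natDegree = n
  orthogonal : ∀ j k, j ≠ k → ∫ x, (Q j).eval x * (Q k).eval x * w x = 0

namespace IsMomentWeight

variable {w : ℝ → ℝ}

noncomputable def moment (hw : IsMomentWeight w) : ℝ[X] →ₗ[ℝ] ℝ where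
  toFun p := ∫ x, p.eval x * w x
  map_add' p q := by
    simp only [eval_add, add_mul]
    exact integral_add (hw.integrable p) (hw.integrable q)
  map_smul' a p := by
    simp only [eval_smul, smul_eq_mul, mul_assoc, integral_const_mul, RingHom.id_apply]

theorem moment_apply (hw : IsMomentWeight w) (p : ℝ[X]) :
    hw.moment p = ∫ x, p.eval x * w x := rfl

theorem moment_mul (hw : IsMomentWeight w) (p q : ℝ[X]) :
    hw.moment (p * q) = ∫ x, p.eval x * q.eval x * w x := by
  simp [moment_apply]

theorem moment_pos (hw : IsMomentWeight w) {q : ℝ[X]} (hq : q ≠ 0) :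
    0 < hw.moment (q * q) := by
  have hpos : ∀ᵐ x, 0 < (q * q).eval x * w x := by
    filter_upwards [hw.ae_pos, (Polynomial.finite_setOfPred_isRoot hq).countable.ae_notMem volume]
      with x hwx hx
    exact mul_pos (by simpa [IsRoot, mul_self_pos] using hx) hwx
  rw [moment_apply, integral_pos_iff_support_of_nonneg_ae (hpos.mono fun x hx => hx.le)
    (hw.integrable _)]
  have hsupp : Function.support (fun x => (q * q).eval x * w x) =ᵐ[volume] (Set.univ : Set ℝ) :=
    ae_eq_univ.2 (hpos.mono fun x hx => hx.ne')
  rw [measure_congr hsupp, Real.volume_univ]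
  exact ENNReal.zero_lt_top

theorem moment_eq_zero_of_odd (hw : IsMomentWeight w) (heven : ∀ x, w (-x) = w x) {p : ℝ[X]}
    (hp : p.comp (-X) = -p) : hw.moment p = 0 :=
  integral_eq_zero_of_odd fun x => by
    have hpx : p.eval (-x) = -p.eval x := by simpa using congrArg (eval x) hp
    rw [heven, hpx, neg_mul]

theorem moment_X_sq_mul {w' : ℝ → ℝ} (hw : IsMomentWeight w) (hw' : IsMomentWeight w')
    (hww' : w' =ᵐ[volume] fun x => x ^ 2 * w x) (p : ℝ[X]) :
    hw.moment (X ^ 2 * p) = hw'.moment p :=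
  integral_congr_ae <| hww'.mono fun x hx => by simp [hx, mul_assoc, mul_left_comm]

end IsMomentWeight

namespace IsMonicOrthogonal

variable {w : ℝ → ℝ} {Q : ℕ → ℝ[X]}

theorem moment_mul_eq_zero_of_degree_lt (hw : IsMomentWeight w) (hQ : IsMonicOrthogonal w Q)
    {n : ℕ} {q : ℝ[X]} (hq : q.degree < n) : hw.moment (Q n * q) = 0 := by
  have hspan : Submodule.span ℝ (Q '' Set.Iio n) ≤
      LinearMap.ker (hw.moment ∘ₗ LinearMap.mulLeft ℝ (Q n)) := by
    rw [Submodule.span_le]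
    rintro _ ⟨j, hj, rfl⟩
    simpa [IsMomentWeight.moment_mul] using hQ.orthogonal n j (Set.mem_Iio.1 hj).ne'
  simpa using hspan (span_image_Iio_eq_degreeLT hQ.monic hQ.natDegree_eq n ▸ mem_degreeLT.2 hq)

theorem eq_of_monic (hw : IsMomentWeight w) (hQ : IsMonicOrthogonal w Q) {n : ℕ} {p : ℝ[X]}
    (hp : p.Monic) (hpn : p.natDegree = n)
    (horth : ∀ q : ℝ[X], q.degree < n → hw.moment (p * q) = 0) :
    p = Q n := by
  by_contra hne
  have hpdeg : p.degree = n := by rw [degree_eq_natDegree hp.ne_zero, hpn]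
  have hdeg : (p - Q n).degree < n := hpdeg ▸ degree_sub_lt_left
    (by rw [hpdeg, degree_eq_natDegree (hQ.monic n).ne_zero, hQ.natDegree_eq]) hp.ne_zero
    (by rw [hp.leadingCoeff, (hQ.monic n).leadingCoeff])
  have hzero : hw.moment ((p - Q n) * (p - Q n)) = 0 := by
    rw [sub_mul, map_sub, horth _ hdeg, hQ.moment_mul_eq_zero_of_degree_lt hw hdeg, sub_zero]
  exact (hw.moment_pos (sub_ne_zero.2 hne)).ne' hzero

theorem X_mul_eq_of_weight_eq_sq_mul {w' : ℝ → ℝ} {R : ℕ → ℝ[X]} (hw : IsMomentWeight w)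
    (hw' : IsMomentWeight w') (heven : ∀ x, w (-x) = w x)
    (hww' : w' =ᵐ[volume] fun x => x ^ 2 * w x) (hQ : IsMonicOrthogonal w Q)
    (hR : IsMonicOrthogonal w' R) {n : ℕ} (hRn : (R n).comp (-X) = R n) :
    X * R n = Q (n + 1) := by
  refine hQ.eq_of_monic hw (monic_X.mul (hR.monic n))
    (by rw [natDegree_X_mul (hR.monic n).ne_zero, hR.natDegree_eq]) fun q hq => ?_
  have hdivX : q.divX.degree < n := by
    rw [degree_lt_iff_coeff_zero] at hq ⊢
    intro k hk
    rw [coeff_divX]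
    exact hq _ (by exact_mod_cast Nat.succ_le_succ hk)
  have hodd : hw.moment (X * R n) = 0 :=
    hw.moment_eq_zero_of_odd heven (by rw [mul_comp, X_comp, hRn, neg_mul])
  have hsplit : X * R n * q = X ^ 2 * (R n * q.divX) + C (q.coeff 0) * (X * R n) := by
    conv_lhs => rw [← divX_mul_X_add q]
    ring
  rw [hsplit, map_add, hw.moment_X_sq_mul hw' hww', hR.moment_mul_eq_zero_of_degree_lt hw' hdivX,
    ← smul_eq_C_mul, map_smul, hodd, smul_zero, add_zero]

end IsMonicOrthogonal

theorem freudWeight_neg (m : ℕ) (lam t x : ℝ) :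
    freudWeight m lam t (-x) = freudWeight m lam t x := by
  simp [freudWeight, (even_two_mul m).neg_pow]

theorem freudWeight_pos (m : ℕ) (lam t : ℝ) {x : ℝ} (hx : x ≠ 0) : 0 < freudWeight m lam t x :=
  mul_pos (rpow_pos_of_pos (abs_pos.2 hx) _) (exp_pos _)

-- Only a.e.: `Real.rpow` has `0 ^ 0 = 1`, so the identity fails at `x = 0` when `2λ + 3 = 0`.
theorem freudWeight_add_one_ae (m : ℕ) (lam t : ℝ) :
    freudWeight m (lam + 1) t =ᵐ[volume] fun x => x ^ 2 * freudWeight m lam t x := by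
  filter_upwards [volume.ae_ne 0] with x hx
  rw [freudWeight, freudWeight, show 2 * (lam + 1) + 1 = 2 * lam + 1 + 2 by ring,
    rpow_add (abs_pos.2 hx), rpow_two, sq_abs]
  ring

theorem integrable_abs_rpow_mul_exp_neg_sq {s : ℝ} (hs : -1 < s) :
    Integrable fun x : ℝ => |x| ^ s * exp (-x ^ 2) :=
  integrable_of_even_of_integrableOn_Ioi (fun x => by simp) <|
    (integrableOn_rpow_mul_exp_neg_mul_sq one_pos hs).congr_fun
      (fun x hx => by simp [abs_of_pos (Set.mem_Ioi.1 hx)]) measurableSet_Ioi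

theorem freudWeight_exponent_le {m : ℕ} (hm : 2 ≤ m) (t x : ℝ) :
    t * x ^ 2 - x ^ (2 * m) ≤ (t + 1) ^ 2 / 4 + 1 - x ^ 2 := by
  have hx4 : x ^ 4 - 1 ≤ x ^ (2 * m) := by
    rw [pow_mul, show x ^ 4 = (x ^ 2) ^ 2 by ring]
    rcases le_total (x ^ 2) 1 with h | h
    · nlinarith [pow_nonneg (sq_nonneg x) m, sq_nonneg x]
    · linarith [pow_le_pow_right₀ h hm]
  nlinarith [sq_nonneg (x ^ 2 - (t + 1) / 2)]

theorem integrable_pow_mul_freudWeight {m : ℕ} (hm : 2 ≤ m) {lam : ℝ} (hlam : -1 < lam) (t : ℝ)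
    (k : ℕ) : Integrable fun x => x ^ k * freudWeight m lam t x := by
  have hs : -1 < 2 * lam + 1 + k := by linarith [k.cast_nonneg (α := ℝ)]
  refine ((integrable_abs_rpow_mul_exp_neg_sq hs).const_mul (exp ((t + 1) ^ 2 / 4 + 1))).mono'
    (by unfold freudWeight; fun_prop) ?_
  filter_upwards [volume.ae_ne 0] with x hx
  rw [freudWeight, norm_mul, norm_mul, norm_pow, Real.norm_eq_abs,
    Real.norm_of_nonneg (rpow_nonneg (abs_nonneg x) _), Real.norm_of_nonneg (exp_pos _).le,
    rpow_add_natCast (abs_ne_zero.2 hx)]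
  calc |x| ^ k * (|x| ^ (2 * lam + 1) * exp (t * x ^ 2 - x ^ (2 * m)))
      ≤ |x| ^ k * (|x| ^ (2 * lam + 1) * exp ((t + 1) ^ 2 / 4 + 1 + -x ^ 2)) := by
        gcongr
        linarith [freudWeight_exponent_le hm t x]
    _ = exp ((t + 1) ^ 2 / 4 + 1) * (|x| ^ (2 * lam + 1) * |x| ^ k * exp (-x ^ 2)) := by
        rw [exp_add]; ring

theorem isMomentWeight_freudWeight {m : ℕ} (hm : 2 ≤ m) {lam : ℝ} (hlam : -1 < lam) (t : ℝ) :
    IsMomentWeight (freudWeight m lam t) where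
  integrable p := by
    simp_rw [eval_eq_sum_range, Finset.sum_mul, mul_assoc]
    exact integrable_finsetSum _ fun i _ =>
      (integrable_pow_mul_freudWeight hm hlam t i).const_mul _
  ae_pos := (volume.ae_ne 0).mono fun _ hx => freudWeight_pos m lam t hx

/-- For `λ > −1`, `t ∈ ℝ` and integer `m ≥ 2`, the monic orthogonal
polynomials of the generalised higher order Freud weight satisfy, for every `n ≥ 1`:
(i) `x P_{2n}(x;λ+1) = P_{2n+1}(x;λ)`, and
(ii) `x² P_{2n−1}(x;λ+1) = x P_{2n}(x;λ) − (β_{2n}(λ) + P_{2n+1}′(0;λ)/P_{2n−1}′(0;λ)) P_{2n−1}(x;λ)`,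
where `P_{2n−1}′(0;λ) ≠ 0`. -/
theorem mixed_recurrence (m : ℕ) (hm : 2 ≤ m) (t : ℝ)
    (P : ℝ → ℕ → Polynomial ℝ) (β : ℝ → ℕ → ℝ)
    (hmonic : ∀ lam, -1 < lam → ∀ n, (P lam n).Monic)
    (hdeg : ∀ lam, -1 < lam → ∀ n, (P lam n).natDegree = n)
    (horth : ∀ lam, -1 < lam → ∀ j k, j ≠ k →
      ∫ x : ℝ, (P lam j).eval x * (P lam k).eval x * freudWeight m lam t x = 0)
    (hβpos : ∀ lam, -1 < lam → ∀ n, 1 ≤ n → 0 < β lam n)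
    (hP0 : ∀ lam, -1 < lam → P lam 0 = 1) (hP1 : ∀ lam, -1 < lam → P lam 1 = X)
    (hrec : ∀ lam, -1 < lam → ∀ n, 1 ≤ n →
      P lam (n + 1) = X * P lam n - C (β lam n) * P lam (n - 1)) :
    ∀ lam, -1 < lam → ∀ n : ℕ, 1 ≤ n →
      X * P (lam + 1) (2 * n) = P lam (2 * n + 1) ∧
      (derivative (P lam (2 * n - 1))).eval 0 ≠ 0 ∧
      X ^ 2 * P (lam + 1) (2 * n - 1) =
        X * P lam (2 * n)
          - C (β lam (2 * n) +
              (derivative (P lam (2 * n + 1))).eval 0 /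
                (derivative (P lam (2 * n - 1))).eval 0) * P lam (2 * n - 1) := by
  intro lam hlam n hn
  obtain ⟨k, rfl⟩ : ∃ k, n = k + 1 := ⟨n - 1, by omega⟩
  have hlam1 : -1 < lam + 1 := by linarith
  have recurrence : ∀ l, -1 < l → IsThreeTermRecurrence (P l) (β l) := fun l hl =>
    ⟨hP0 l hl, hP1 l hl, fun j => hrec l hl (j + 1) j.succ_pos⟩
  have orthogonal : ∀ l, -1 < l → IsMonicOrthogonal (freudWeight m l t) (P l) := fun l hl =>
    ⟨hmonic l hl, hdeg l hl, horth l hl⟩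
  have hshift : ∀ j, X * P (lam + 1) (2 * j) = P lam (2 * j + 1) := fun j =>
    (orthogonal lam hlam).X_mul_eq_of_weight_eq_sq_mul (isMomentWeight_freudWeight hm hlam t)
      (isMomentWeight_freudWeight hm hlam1 t) (freudWeight_neg m lam t)
      (freudWeight_add_one_ae m lam t) (orthogonal _ hlam1)
      ((recurrence _ hlam1).comp_neg_X_two_mul j)
  have hβ : ∀ j, β (lam + 1) (2 * j + 1) ≠ 0 := fun j => (hβpos _ hlam1 _ (by omega)).ne'
  rw [show 2 * (k + 1) - 1 = 2 * k + 1 by omega]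
  refine ⟨hshift (k + 1), ?_, (recurrence lam hlam).X_sq_mul_eq (recurrence _ hlam1) hshift hβ k⟩
  rw [← hshift k, derivative_X_mul_eval_zero]
  exact (recurrence _ hlam1).eval_zero_two_mul_ne_zero hβ k
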